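/- Let V and W be finite-dimensional real inner product spaces, let (J₁, J₂, J₃) be a compatible quaternionic structure on V, and let (e_1, …, e_n, η_1, …, η_d) be an orthonormal basis of V × W. Writing x¹ for the V-component of x ∈ V × W, for each s ∈ {1, 2, 3} one has Σ_{j=1}^{n} Σ_{β=1}^{d} ( ⟨e_j¹, η_β¹⟩² − Σ_{k=1}^{3} ⟨e_j¹, J_k(η_β¹)⟩² ) = −Σ_{k∈{1,2,3}, k≠s} Σ_{j=1}^{n} Σ_{β=1}^{d} ⟨J_k(η_β¹), e_j¹⟩² + Σ_{i=1}^{n} Σ_{j=1}^{n} ( ⟨J_s(e_i¹), e_j¹⟩² − ⟨e_i¹, e_j¹⟩² ). (This is the tangent-vector identity (hMAIN2) in the paper's Lemma 4.1.) -/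

import Mathlib

open scoped RealInnerProductSpace

/-! The `V`-components `eᵢ, η_β` of the basis satisfy Parseval's identity on `V`. Applied to the
vectors `eᵢ` and `J_s eᵢ` (and using `‖J_s eᵢ‖ = ‖eᵢ‖`), it shows that
`∑ ⟪eᵢ, η_β⟫² + ∑ ⟪eᵢ, eⱼ⟫²` and `∑ ⟪J_s eᵢ, eⱼ⟫² + ∑ ⟪J_s eᵢ, η_β⟫²` both equal `∑ ‖eᵢ‖²`.
Since `J_s` is skew-adjoint, the last sum is the `k = s` term of `∑ₖ ∑ ⟪J_k η_β, eᵢ⟫²`, and the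
identity is the difference of the two. -/

section

variable {V W : Type*} [NormedAddCommGroup V] [InnerProductSpace ℝ V]
  [NormedAddCommGroup W] [InnerProductSpace ℝ W]

theorem inner_apply_eq_neg_inner_of_sq_eq_neg (J : V →ₗ[ℝ] V)
    (hiso : ∀ x y : V, ⟪J x, J y⟫ = ⟪x, y⟫) (hsq : ∀ x : V, J (J x) = -x) (x y : V) :
    ⟪J x, y⟫ = -⟪x, J y⟫ := by
  rw [← hiso x (J y), hsq, inner_neg_right, neg_neg]

theorem OrthonormalBasis.sum_sq_inner_fst {ι : Type*} [Fintype ι]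
    (b : OrthonormalBasis ι ℝ (WithLp 2 (V × W))) (v : V) :
    ∑ i, ⟪v, (b i).fst⟫ ^ 2 = ‖v‖ ^ 2 := by
  have h := b.sum_sq_inner_left (WithLp.toLp 2 (v, (0 : W)))
  simpa [WithLp.prod_inner_apply, WithLp.prod_norm_sq_eq_of_L2] using h

variable {ι κ : Type*} [Fintype ι] [Fintype κ]

theorem sum_sum_sq_inner_add_sum_sum_sq_inner {e : ι → V} {η : κ → V}
    (hpar : ∀ v, ∑ i, ⟪v, e i⟫ ^ 2 + ∑ j, ⟪v, η j⟫ ^ 2 = ‖v‖ ^ 2) {α : Type*} [Fintype α]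
    (f : α → V) :
    ∑ a, ∑ i, ⟪f a, e i⟫ ^ 2 + ∑ a, ∑ j, ⟪f a, η j⟫ ^ 2 = ∑ a, ‖f a‖ ^ 2 := by
  rw [← Finset.sum_add_distrib]
  exact Finset.sum_congr rfl fun a _ => hpar (f a)

theorem sum_sq_inner_sub_sum_sq_inner_apply_eq (J : Fin 3 → (V →ₗ[ℝ] V))
    (hiso : ∀ (k : Fin 3) (x y : V), ⟪J k x, J k y⟫ = ⟪x, y⟫)
    (hsq : ∀ (k : Fin 3) (x : V), J k (J k x) = -x) {e : ι → V} {η : κ → V}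
    (hpar : ∀ v, ∑ i, ⟪v, e i⟫ ^ 2 + ∑ j, ⟪v, η j⟫ ^ 2 = ‖v‖ ^ 2) (s : Fin 3) :
    ∑ i, ∑ j, (⟪e i, η j⟫ ^ 2 - ∑ k, ⟪e i, J k (η j)⟫ ^ 2)
      = -(∑ k ∈ ({s}ᶜ : Finset (Fin 3)), ∑ i, ∑ j, ⟪J k (η j), e i⟫ ^ 2)
        + ∑ i, ∑ i', (⟪J s (e i), e i'⟫ ^ 2 - ⟪e i, e i'⟫ ^ 2) := by
  set F : Fin 3 → ℝ := fun k => ∑ i, ∑ j, ⟪J k (η j), e i⟫ ^ 2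
  have parseval_e := sum_sum_sq_inner_add_sum_sum_sq_inner hpar e
  have parseval_Je := sum_sum_sq_inner_add_sum_sum_sq_inner hpar (fun i => J s (e i))
  have hF_s : ∑ i, ∑ j, ⟪J s (e i), η j⟫ ^ 2 = F s := by
    simp only [F, inner_apply_eq_neg_inner_of_sq_eq_neg (J s) (hiso s) (hsq s), neg_sq,
      real_inner_comm (e _)]
  have hF_sum : ∑ i, ∑ j, ∑ k, ⟪e i, J k (η j)⟫ ^ 2 = ∑ k, F k := by
    simp only [F, real_inner_comm (e _)]
    exact (Finset.sum_congr rfl fun _ _ => Finset.sum_comm).trans Finset.sum_comm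
  have hF_compl : ∑ k ∈ ({s}ᶜ : Finset (Fin 3)), F k = ∑ k, F k - F s := by
    rw [← Finset.sum_compl_add_sum {s} F, Finset.sum_singleton, add_sub_cancel_right]
  have hnorm : ∀ i, ‖J s (e i)‖ = ‖e i‖ := fun i => by
    rw [norm_eq_sqrt_real_inner, hiso, ← norm_eq_sqrt_real_inner]
  simp only [Finset.sum_sub_distrib, hnorm] at parseval_Je ⊢
  rw [hF_sum, hF_compl]
  linarith

end

theorem stmt_11_general {V W : Type*} [NormedAddCommGroup V] [InnerProductSpace ℝ V]
    [NormedAddCommGroup W] [InnerProductSpace ℝ W]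
    (J : Fin 3 → (V →ₗ[ℝ] V))
    (hiso : ∀ (k : Fin 3) (x y : V), ⟪J k x, J k y⟫ = ⟪x, y⟫)
    (hsq : ∀ (k : Fin 3) (x : V), J k (J k x) = -x)
    {n d : ℕ} (b : OrthonormalBasis (Fin n ⊕ Fin d) ℝ (WithLp 2 (V × W)))
    (s : Fin 3) :
    ∑ j : Fin n, ∑ β : Fin d,
      (⟪(b (Sum.inl j)).fst, (b (Sum.inr β)).fst⟫ ^ 2
        - ∑ k : Fin 3, ⟪(b (Sum.inl j)).fst, J k ((b (Sum.inr β)).fst)⟫ ^ 2)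
      = -(∑ k ∈ ({s}ᶜ : Finset (Fin 3)), ∑ j : Fin n, ∑ β : Fin d,
            ⟪J k ((b (Sum.inr β)).fst), (b (Sum.inl j)).fst⟫ ^ 2)
        + ∑ i : Fin n, ∑ j : Fin n,
            (⟪J s ((b (Sum.inl i)).fst), (b (Sum.inl j)).fst⟫ ^ 2
              - ⟪(b (Sum.inl i)).fst, (b (Sum.inl j)).fst⟫ ^ 2) :=
  sum_sq_inner_sub_sum_sq_inner_apply_eq J hiso hsq
    (fun v => by rw [← b.sum_sq_inner_fst v, Fintype.sum_sum_type]) s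

/-- Tangent-vector identity (hMAIN2) in the paper's Lemma 4.1. -/
theorem stmt_11 {V W : Type*} [NormedAddCommGroup V] [InnerProductSpace ℝ V]
    [FiniteDimensional ℝ V] [NormedAddCommGroup W] [InnerProductSpace ℝ W]
    [FiniteDimensional ℝ W] (J : Fin 3 → (V →ₗ[ℝ] V))
    (hiso : ∀ (k : Fin 3) (x y : V), ⟪J k x, J k y⟫ = ⟪x, y⟫)
    (hsq : ∀ (k : Fin 3) (x : V), J k (J k x) = -x)
    (hcomp : ∀ x : V, J 0 (J 1 x) = J 2 x)
    {n d : ℕ} (b : OrthonormalBasis (Fin n ⊕ Fin d) ℝ (WithLp 2 (V × W)))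
    (s : Fin 3) :
    ∑ j : Fin n, ∑ β : Fin d,
      (⟪(b (Sum.inl j)).fst, (b (Sum.inr β)).fst⟫ ^ 2
        - ∑ k : Fin 3, ⟪(b (Sum.inl j)).fst, J k ((b (Sum.inr β)).fst)⟫ ^ 2)
      = -(∑ k ∈ ({s}ᶜ : Finset (Fin 3)), ∑ j : Fin n, ∑ β : Fin d,
            ⟪J k ((b (Sum.inr β)).fst), (b (Sum.inl j)).fst⟫ ^ 2)
        + ∑ i : Fin n, ∑ j : Fin n,
            (⟪J s ((b (Sum.inl i)).fst), (b (Sum.inl j)).fst⟫ ^ 2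
              - ⟪(b (Sum.inl i)).fst, (b (Sum.inl j)).fst⟫ ^ 2) :=
  stmt_11_general J hiso hsq b s
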